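/- Let φ be a subformula of some ABBABE formula such that φ has the form Qx ψ with Q ∈ {∀, ∃}. Then every formula β in the component set C(ψ) is a module, or of the form ∀x'□β', or of the form ∃x'◇β'. In particular, formulas of the form ∀x∃y□α are not syntactically expressible in the ABBABE fragment. -/

import Mathlib

set_option maxHeartbeats 1000000

/-! ## Syntax of first-order modal logic (FOML)

Predicate symbols and variables are represented by natural numbers; an atom
`atom p args` applies the predicate symbol `p` to the list of variables `args`
(the arity of `p` in this occurrence is the length of `args`). -/
inductive Formula : Type where
  | atom (p : ℕ) (args : List ℕ)
  | neg  (φ : Formula)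
  | and  (φ ψ : Formula)
  | or   (φ ψ : Formula)
  | box  (φ : Formula)
  | dia  (φ : Formula)
  | ex   (x : ℕ) (φ : Formula)
  | all  (x : ℕ) (φ : Formula)
deriving DecidableEq

namespace Formula

def imp (φ ψ : Formula) : Formula := .or φ.neg ψ
def biimp (φ ψ : Formula) : Formula := .and (imp φ ψ) (imp ψ φ)
/-- a fixed tautology `⊤` -/
def top : Formula := .or (.atom 0 []) (.neg (.atom 0 []))
/-- a fixed contradiction `⊥` -/
def bot : Formula := .and (.atom 0 []) (.neg (.atom 0 []))

end Formula

def bigAnd (l : List Formula) : Formula := l.foldr Formula.and Formula.top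
def bigOr  (l : List Formula) : Formula := l.foldr Formula.or Formula.bot

/-! ## Semantics: Kripke structures with world-relative domains -/

structure Model where
  W : Type
  D : Type
  R : W → W → Prop
  dom : W → Set D
  ρ : W → ℕ → Set (List D)

/-- `M` is an increasing domain model: nonempty countable set of worlds, nonempty
countable domain, nonempty local domains that increase along the accessibility
relation, and interpretations of predicates at a world take values in the local
domain of that world. -/
def Model.Increasing (M : Model) : Prop :=
  Nonempty M.W ∧ Nonempty M.D ∧ Countable M.W ∧ Countable M.D ∧
    (∀ w, (M.dom w).Nonempty) ∧
    (∀ w v, M.R w v → M.dom w ⊆ M.dom v) ∧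
    (∀ w p l, l ∈ M.ρ w p → ∀ d ∈ l, d ∈ M.dom w)

def Model.sat (M : Model) : M.W → (ℕ → M.D) → Formula → Prop
  | w, σ, .atom p args => args.map σ ∈ M.ρ w p
  | w, σ, .neg φ => ¬ M.sat w σ φ
  | w, σ, .and φ ψ => M.sat w σ φ ∧ M.sat w σ ψ
  | w, σ, .or φ ψ => M.sat w σ φ ∨ M.sat w σ ψ
  | w, σ, .box φ => ∀ v, M.R w v → M.sat v σ φ
  | w, σ, .dia φ => ∃ v, M.R w v ∧ M.sat v σ φ
  | w, σ, .ex x φ => ∃ d ∈ M.dom w, M.sat w (Function.update σ x d) φ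
  | w, σ, .all x φ => ∀ d ∈ M.dom w, M.sat w (Function.update σ x d) φ

/-- the assignment `σ` is relevant at the world `w` -/
def Model.relevant (M : Model) (w : M.W) (σ : ℕ → M.D) : Prop := ∀ x, σ x ∈ M.dom w

/-- satisfiability over increasing domain models -/
def Satisfiable (φ : Formula) : Prop :=
  ∃ (M : Model), M.Increasing ∧ ∃ (w : M.W) (σ : ℕ → M.D), M.relevant w σ ∧ M.sat w σ φ
/-! ## Free and bound variables, cleanliness, substitution, α-equivalence -/

namespace Formula

def fv : Formula → Finset ℕ
  | .atom _ args => args.toFinset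
  | .neg φ => φ.fv
  | .and φ ψ => φ.fv ∪ ψ.fv
  | .or φ ψ => φ.fv ∪ ψ.fv
  | .box φ => φ.fv
  | .dia φ => φ.fv
  | .ex x φ => φ.fv.erase x
  | .all x φ => φ.fv.erase x

def bv : Formula → Finset ℕ
  | .atom _ _ => ∅
  | .neg φ => φ.bv
  | .and φ ψ => φ.bv ∪ ψ.bv
  | .or φ ψ => φ.bv ∪ ψ.bv
  | .box φ => φ.bv
  | .dia φ => φ.bv
  | .ex x φ => insert x φ.bv
  | .all x φ => insert x φ.bv

/-- every use of a quantifier in the formula quantifies a distinct variable -/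
def uniqueBinders : Formula → Prop
  | .atom _ _ => True
  | .neg φ => φ.uniqueBinders
  | .and φ ψ => φ.uniqueBinders ∧ ψ.uniqueBinders ∧ Disjoint φ.bv ψ.bv
  | .or φ ψ => φ.uniqueBinders ∧ ψ.uniqueBinders ∧ Disjoint φ.bv ψ.bv
  | .box φ => φ.uniqueBinders
  | .dia φ => φ.uniqueBinders
  | .ex x φ => φ.uniqueBinders ∧ x ∉ φ.bv
  | .all x φ => φ.uniqueBinders ∧ x ∉ φ.bv

/-- a formula is clean if no variable occurs both bound and free in it and
every use of a quantifier quantifies a distinct variable -/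
def Clean (φ : Formula) : Prop := φ.uniqueBinders ∧ Disjoint φ.fv φ.bv

/-- `φ.subst y z` is `φ[z/y]`: replace every free occurrence of `y` by `z` -/
def subst (y z : ℕ) : Formula → Formula
  | .atom p args => .atom p (args.map fun v => if v = y then z else v)
  | .neg φ => .neg (φ.subst y z)
  | .and φ ψ => .and (φ.subst y z) (ψ.subst y z)
  | .or φ ψ => .or (φ.subst y z) (ψ.subst y z)
  | .box φ => .box (φ.subst y z)
  | .dia φ => .dia (φ.subst y z)
  | .ex x φ => if x = y then .ex x φ else .ex x (φ.subst y z)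
  | .all x φ => if x = y then .all x φ else .all x (φ.subst y z)

def isLiteralB : Formula → Bool
  | .atom _ _ => true
  | .neg (.atom _ _) => true
  | _ => false

/-- a module is a literal, a `□`-formula, or a `◇`-formula -/
def isModuleB : Formula → Bool
  | .box _ => true
  | .dia _ => true
  | φ => φ.isLiteralB

/-- the component set `C(φ)` of a formula -/
def comps : Formula → Finset Formula
  | .and φ ψ => φ.comps ∪ ψ.comps
  | .or φ ψ => φ.comps ∪ ψ.comps
  | .ex x φ => insert (.ex x φ) φ.comps
  | .all x φ => insert (.all x φ) φ.comps
  | φ => {φ}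

end Formula

/-- α-equivalence (renaming of bound variables) -/
inductive AlphaEq : Formula → Formula → Prop where
  | atom (p : ℕ) (args : List ℕ) : AlphaEq (.atom p args) (.atom p args)
  | neg {φ φ'} : AlphaEq φ φ' → AlphaEq (.neg φ) (.neg φ')
  | and {φ φ' ψ ψ'} : AlphaEq φ φ' → AlphaEq ψ ψ' → AlphaEq (.and φ ψ) (.and φ' ψ')
  | or {φ φ' ψ ψ'} : AlphaEq φ φ' → AlphaEq ψ ψ' → AlphaEq (.or φ ψ) (.or φ' ψ')
  | box {φ φ'} : AlphaEq φ φ' → AlphaEq (.box φ) (.box φ')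
  | dia {φ φ'} : AlphaEq φ φ' → AlphaEq (.dia φ) (.dia φ')
  | ex {x x' : ℕ} {φ φ'}
      (h : ∀ z, z ∉ φ.bv ∪ φ'.bv → AlphaEq (φ.subst x z) (φ'.subst x' z)) :
      AlphaEq (.ex x φ) (.ex x' φ')
  | all {x x' : ℕ} {φ φ'}
      (h : ∀ z, z ∉ φ.bv ∪ φ'.bv → AlphaEq (φ.subst x z) (φ'.subst x' z)) :
      AlphaEq (.all x φ) (.all x' φ')

/-- a finite set of formulas is clean if the conjunction of its members is clean -/
def CleanSet (Γ : Finset Formula) : Prop :=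
  (∀ φ ∈ Γ, φ.uniqueBinders) ∧
    Disjoint (Γ.sup Formula.fv) (Γ.sup Formula.bv) ∧
    (∀ φ ∈ Γ, ∀ ψ ∈ Γ, φ ≠ ψ → Disjoint φ.bv ψ.bv)

/-- `Γ` is Existential-safe: every component of every formula of `Γ` is a module
or universally quantified -/
def ExSafe (Γ : Finset Formula) : Prop :=
  ∀ φ ∈ Γ, ∀ β ∈ φ.comps, β.isModuleB = true ∨ ∃ (x : ℕ) (γ : Formula), β = .all x γ
/-- The `ABBABE` fragment (in negation normal form): literals, `∧`, `∨`, `□α`,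
`◇α`, and the bundles `∀x□α`, `□∀xα`, `□∃xα` together with their duals
`∃x◇α`, `◇∃xα`, `◇∀xα`. -/
inductive ABBABE : Formula → Prop where
  | atom (p : ℕ) (args : List ℕ) : ABBABE (.atom p args)
  | natom (p : ℕ) (args : List ℕ) : ABBABE (.neg (.atom p args))
  | and {φ ψ : Formula} : ABBABE φ → ABBABE ψ → ABBABE (.and φ ψ)
  | or {φ ψ : Formula} : ABBABE φ → ABBABE ψ → ABBABE (.or φ ψ)
  | box {φ : Formula} : ABBABE φ → ABBABE (.box φ)
  | dia {φ : Formula} : ABBABE φ → ABBABE (.dia φ)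
  | allBox {x : ℕ} {φ : Formula} : ABBABE φ → ABBABE (.all x (.box φ))
  | exDia {x : ℕ} {φ : Formula} : ABBABE φ → ABBABE (.ex x (.dia φ))
  | boxAll {x : ℕ} {φ : Formula} : ABBABE φ → ABBABE (.box (.all x φ))
  | diaEx {x : ℕ} {φ : Formula} : ABBABE φ → ABBABE (.dia (.ex x φ))
  | boxEx {x : ℕ} {φ : Formula} : ABBABE φ → ABBABE (.box (.ex x φ))
  | diaAll {x : ℕ} {φ : Formula} : ABBABE φ → ABBABE (.dia (.all x φ))

/-- `Subf φ ψ` : `φ` is a subformula of `ψ` -/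
inductive Subf : Formula → Formula → Prop where
  | refl (φ : Formula) : Subf φ φ
  | neg {φ ψ} : Subf φ ψ → Subf φ (.neg ψ)
  | andL {φ ψ χ} : Subf φ ψ → Subf φ (.and ψ χ)
  | andR {φ ψ χ} : Subf φ χ → Subf φ (.and ψ χ)
  | orL {φ ψ χ} : Subf φ ψ → Subf φ (.or ψ χ)
  | orR {φ ψ χ} : Subf φ χ → Subf φ (.or ψ χ)
  | box {φ ψ} : Subf φ ψ → Subf φ (.box ψ)
  | dia {φ ψ} : Subf φ ψ → Subf φ (.dia ψ)
  | ex {x : ℕ} {φ ψ} : Subf φ ψ → Subf φ (.ex x ψ)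
  | all {x : ℕ} {φ ψ} : Subf φ ψ → Subf φ (.all x ψ)

/-- `φ` is a subformula of the `ABBABE` fragment: it is a subformula of some
formula of the fragment -/
def IsSubABBABE (φ : Formula) : Prop := ∃ ψ, ABBABE ψ ∧ Subf φ ψ

/-! Quantifiers occur in the fragment only inside the bundles `∀x□`, `∃x◇`, `□∀x`, `◇∃x`, `□∃x`,
`◇∀x`, so the body of every quantified subformula of an `ABBABE` formula lies in the fragment
again, and its components are read off the grammar. For `∀x∃y□α` the body `∃y□α` is its own
component, and it has none of the permitted shapes. -/

namespace Formula

def IsModuleOrBundle (β : Formula) : Prop :=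
  β.isModuleB = true ∨ (∃ (x : ℕ) (γ : Formula), β = .all x (.box γ)) ∨
    ∃ (x : ℕ) (γ : Formula), β = .ex x (.dia γ)

def IsQuantifiedABBABE (φ : Formula) : Prop :=
  ∃ (x : ℕ) (ψ : Formula), (φ = .all x ψ ∨ φ = .ex x ψ) ∧ ABBABE ψ

end Formula

open Formula

namespace ABBABE

theorem abbabe_or_isQuantifiedABBABE_of_subf {φ χ : Formula} (hχ : ABBABE χ) (hs : Subf φ χ) :
    ABBABE φ ∨ φ.IsQuantifiedABBABE := by
  induction hχ generalizing φ with
  | atom p args => cases hs; exact .inl (.atom p args)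
  | natom p args =>
    cases hs with
    | refl => exact .inl (.natom p args)
    | neg hs => cases hs; exact .inl (.atom p args)
  | and h₁ h₂ ih₁ ih₂ =>
    cases hs with
    | refl => exact .inl (.and h₁ h₂)
    | andL hs => exact ih₁ hs
    | andR hs => exact ih₂ hs
  | or h₁ h₂ ih₁ ih₂ =>
    cases hs with
    | refl => exact .inl (.or h₁ h₂)
    | orL hs => exact ih₁ hs
    | orR hs => exact ih₂ hs
  | box h ih =>
    cases hs with
    | refl => exact .inl (.box h)
    | box hs => exact ih hs
  | dia h ih =>
    cases hs with
    | refl => exact .inl (.dia h)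
    | dia hs => exact ih hs
  | allBox h ih =>
    cases hs with
    | refl => exact .inl (.allBox h)
    | all hs =>
      cases hs with
      | refl => exact .inl (.box h)
      | box hs => exact ih hs
  | exDia h ih =>
    cases hs with
    | refl => exact .inl (.exDia h)
    | ex hs =>
      cases hs with
      | refl => exact .inl (.dia h)
      | dia hs => exact ih hs
  | boxAll h ih =>
    cases hs with
    | refl => exact .inl (.boxAll h)
    | box hs =>
      cases hs with
      | refl => exact .inr ⟨_, _, .inl rfl, h⟩
      | all hs => exact ih hs
  | diaEx h ih =>
    cases hs with
    | refl => exact .inl (.diaEx h)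
    | dia hs =>
      cases hs with
      | refl => exact .inr ⟨_, _, .inr rfl, h⟩
      | ex hs => exact ih hs
  | boxEx h ih =>
    cases hs with
    | refl => exact .inl (.boxEx h)
    | box hs =>
      cases hs with
      | refl => exact .inr ⟨_, _, .inr rfl, h⟩
      | ex hs => exact ih hs
  | diaAll h ih =>
    cases hs with
    | refl => exact .inl (.diaAll h)
    | dia hs =>
      cases hs with
      | refl => exact .inr ⟨_, _, .inl rfl, h⟩
      | all hs => exact ih hs

theorem isModuleOrBundle_of_mem_comps {ψ β : Formula} (hψ : ABBABE ψ) (hβ : β ∈ ψ.comps) :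
    β.IsModuleOrBundle := by
  induction hψ with
  | and _ _ ih₁ ih₂ | or _ _ ih₁ ih₂ =>
    rcases Finset.mem_union.mp hβ with hβ | hβ
    exacts [ih₁ hβ, ih₂ hβ]
  | allBox =>
    rcases Finset.mem_insert.mp hβ with rfl | hβ
    · exact .inr (.inl ⟨_, _, rfl⟩)
    · simp only [comps, Finset.mem_singleton] at hβ
      exact hβ ▸ .inl rfl
  | exDia =>
    rcases Finset.mem_insert.mp hβ with rfl | hβ
    · exact .inr (.inr ⟨_, _, rfl⟩)
    · simp only [comps, Finset.mem_singleton] at hβ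
      exact hβ ▸ .inl rfl
  | _ =>
    simp only [comps, Finset.mem_singleton] at hβ
    exact hβ ▸ .inl rfl

end ABBABE

theorem abbabe_body_of_isSubABBABE {φ ψ : Formula} {x : ℕ} (hφ : IsSubABBABE φ)
    (hform : φ = .all x ψ ∨ φ = .ex x ψ) : ABBABE ψ := by
  obtain ⟨χ, hχ, hs⟩ := hφ
  rcases hχ.abbabe_or_isQuantifiedABBABE_of_subf hs with hA | ⟨x', ψ', hform', hψ'⟩
  · rcases hform with rfl | rfl
    · cases hA with | allBox h => exact .box h
    · cases hA with | exDia h => exact .dia h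
  · rcases hform with rfl | rfl <;> rcases hform' with h | h <;> cases h <;> exact hψ'

/-- If `φ` is a subformula of some `ABBABE` formula and `φ`
has the form `Qx ψ` with `Q ∈ {∀, ∃}`, then every component of `ψ` is a module,
or of the form `∀x'□β'`, or of the form `∃x'◇β'`.  In particular, formulas of
the form `∀x∃y□α` are not syntactically expressible in the `ABBABE`
fragment. -/
theorem abbabe_components_shape :
    (∀ (φ ψ : Formula) (x : ℕ), IsSubABBABE φ →
      (φ = .all x ψ ∨ φ = .ex x ψ) →
      ∀ β ∈ ψ.comps,
        β.isModuleB = true ∨ (∃ (x' : ℕ) (β' : Formula), β = .all x' (.box β')) ∨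
          ∃ (x' : ℕ) (β' : Formula), β = .ex x' (.dia β')) ∧
    (∀ (x y : ℕ) (α : Formula), ¬ IsSubABBABE (.all x (.ex y (.box α)))) := by
  have components : ∀ (φ ψ : Formula) (x : ℕ), IsSubABBABE φ → (φ = .all x ψ ∨ φ = .ex x ψ) →
      ∀ β ∈ ψ.comps, β.IsModuleOrBundle := fun _ _ _ hφ hform _ hβ =>
    (abbabe_body_of_isSubABBABE hφ hform).isModuleOrBundle_of_mem_comps hβ
  refine ⟨components, fun x y α hsub => ?_⟩
  have hshape := components _ (.ex y (.box α)) x hsub (.inl rfl) (.ex y (.box α)) (by simp [comps])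
  simp [IsModuleOrBundle, isModuleB, isLiteralB] at hshape
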